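/- For every X' = (t',x') ∈ Q there exist R > 0 and 0 < t̄ < t' such that the closure of B_t̄(X',R) is contained in Q and u(t,x) = min over y ∈ Ω of [(t − t̄) L((x − y)/(t − t̄)) + u(t̄, y)] for each (t,x) ∈ B_t̄(X',R). -/

import Mathlib

/-! The Hopf formula minimizes the cost of straight paths issued from the lateral or initial
boundary. Since the action `(t - s) L((x - y)/(t - s)) = L(x - y)/(t - s)` is subadditive under
concatenation of paths (convexity of `L`), `u(t, x) ≤ (t - t̄) L((x - y)/(t - t̄)) + u(t̄, y)` for
every `y`. Conversely, near `X'` a minimizing segment from `(s, z)` with `z ∈ ∂Ω` has length at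
least `δ`, so it costs at least `c δ² / (t - s)`, while its cost is at most `φ(0, x) - φ(s, z)`,
which is bounded; hence `t - s` is bounded below. If `t̄` is close enough to `t'`, the minimizing
segment therefore crosses the time `t̄` at a point `y` close to `x`, hence in `Ω`, and splitting the
segment there gives equality. -/

open scoped RealInnerProductSpace
open Filter Topology Set Metric

noncomputable section

/-- The Lagrangian `L(q) = ½ ⟨A⁻¹ q, q⟩`. -/
def Lag {n : ℕ} (A : Matrix (Fin n) (Fin n) ℝ) (q : EuclideanSpace ℝ (Fin n)) : ℝ :=
  (1 / 2) * ⟪Matrix.toEuclideanLin A⁻¹ q, q⟫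

/-- The Hamiltonian `H(p) = ½ ⟨A p, p⟩`. -/
def Ham {n : ℕ} (A : Matrix (Fin n) (Fin n) ℝ) (p : EuclideanSpace ℝ (Fin n)) : ℝ :=
  (1 / 2) * ⟪Matrix.toEuclideanLin A p, p⟫

/-- Euclidean norm on `ℝ × ℝⁿ`. -/
def pnorm {n : ℕ} (V : ℝ × EuclideanSpace ℝ (Fin n)) : ℝ :=
  Real.sqrt (V.1 ^ 2 + ‖V.2‖ ^ 2)

/-- Euclidean pairing on `ℝ × ℝⁿ`. -/
def pairR {n : ℕ} (P V : ℝ × EuclideanSpace ℝ (Fin n)) : ℝ :=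
  P.1 * V.1 + ⟪P.2, V.2⟫

/-- Open Euclidean ball in `ℝ × ℝⁿ`. -/
def pball {n : ℕ} (X : ℝ × EuclideanSpace ℝ (Fin n)) (R : ℝ) :
    Set (ℝ × EuclideanSpace ℝ (Fin n)) :=
  {Y | pnorm (Y - X) < R}

/-- `B_t̄(X,R) = ((t̄,∞) × ℝⁿ) ∩ B(X,R)`. -/
def tball {n : ℕ} (tbar : ℝ) (X : ℝ × EuclideanSpace ℝ (Fin n)) (R : ℝ) :
    Set (ℝ × EuclideanSpace ℝ (Fin n)) :=
  {Y | tbar < Y.1} ∩ pball X R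

/-- Superdifferential of `w` at `X`:
`P ∈ D⁺w(X)` iff `limsup_{Y→X} (w(Y)−w(X)−⟨P,Y−X⟩)/|Y−X| ≤ 0`. -/
def superDiff {n : ℕ} (w : ℝ × EuclideanSpace ℝ (Fin n) → ℝ)
    (X P : ℝ × EuclideanSpace ℝ (Fin n)) : Prop :=
  ∀ ε > 0, ∀ᶠ Y in 𝓝[≠] X, w Y - w X - pairR P (Y - X) ≤ ε * pnorm (Y - X)

theorem LinearMap.IsPositive.inv_mul_inner_add_le {E : Type*} [NormedAddCommGroup E]
    [InnerProductSpace ℝ E] {T : E →ₗ[ℝ] E} (hT : T.IsPositive) {a b : ℝ} (ha : 0 < a)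
    (hb : 0 < b) (v w : E) :
    (a + b)⁻¹ * ⟪T (v + w), v + w⟫ ≤ a⁻¹ * ⟪T v, v⟫ + b⁻¹ * ⟪T w, w⟫ := by
  have hwv : ⟪T w, v⟫ = ⟪T v, w⟫ := by rw [hT.isSymmetric, real_inner_comm]
  have hsq := hT.inner_nonneg_left (b • v - a • w)
  simp only [map_add, map_sub, map_smul, inner_add_left, inner_add_right, inner_sub_left,
    inner_sub_right, real_inner_smul_left, real_inner_smul_right, hwv] at hsq ⊢
  rw [inv_mul_le_iff₀ (by positivity)]
  field_simp
  nlinarith [mul_pos ha hb]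

theorem exists_mul_sq_norm_le_inner_self {E : Type*} [NormedAddCommGroup E]
    [InnerProductSpace ℝ E] [FiniteDimensional ℝ E] {T : E →ₗ[ℝ] E}
    (hT : ∀ x ≠ 0, 0 < ⟪T x, x⟫) : ∃ c > 0, ∀ x, c * ‖x‖ ^ 2 ≤ ⟪T x, x⟫ := by
  have hcont : Continuous fun x => ⟪T x, x⟫ :=
    T.continuous_of_finiteDimensional.inner continuous_id
  obtain ⟨c, hc0, hc⟩ := (isCompact_sphere (0 : E) 1).exists_forall_le' hcont.continuousOn
    fun x hx => hT x (ne_zero_of_mem_unit_sphere ⟨x, hx⟩)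
  refine ⟨c, hc0, fun x => ?_⟩
  rcases eq_or_ne x 0 with rfl | hx
  · simp
  have hxn : 0 < ‖x‖ := norm_pos_iff.2 hx
  have hunit : ‖x‖⁻¹ • x ∈ Metric.sphere (0 : E) 1 := by
    simp [norm_smul, hxn.ne']
  have := hc _ hunit
  simp only [map_smul, real_inner_smul_left, real_inner_smul_right] at this
  calc c * ‖x‖ ^ 2 ≤ ‖x‖⁻¹ * (‖x‖⁻¹ * ⟪T x, x⟫) * ‖x‖ ^ 2 := by gcongr
    _ = ⟪T x, x⟫ := by field_simp

section Lagrangian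

variable {n : ℕ} {A : Matrix (Fin n) (Fin n) ℝ}

lemma lag_smul (r : ℝ) (q : EuclideanSpace ℝ (Fin n)) : Lag A (r • q) = r ^ 2 * Lag A q := by
  simp only [Lag, map_smul, real_inner_smul_left, real_inner_smul_right]
  ring

@[simp]
lemma lag_zero : Lag A (0 : EuclideanSpace ℝ (Fin n)) = 0 := by
  simp [Lag]

lemma isPositive_toEuclideanLin_inv (hA : A.PosDef) : (Matrix.toEuclideanLin A⁻¹).IsPositive :=
  Matrix.isPositive_toEuclideanLin_iff.2 hA.inv.posSemidef

lemma inv_mul_lag_add_le (hA : A.PosDef) {a b : ℝ} (ha : 0 < a) (hb : 0 < b)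
    (v w : EuclideanSpace ℝ (Fin n)) :
    (a + b)⁻¹ * Lag A (v + w) ≤ a⁻¹ * Lag A v + b⁻¹ * Lag A w := by
  have := (isPositive_toEuclideanLin_inv hA).inv_mul_inner_add_le ha hb v w
  simp only [Lag]
  linarith

lemma exists_mul_sq_norm_le_lag (hA : A.PosDef) :
    ∃ c > 0, ∀ q : EuclideanSpace ℝ (Fin n), c * ‖q‖ ^ 2 ≤ Lag A q := by
  obtain ⟨c, hc0, hc⟩ := exists_mul_sq_norm_le_inner_self (T := Matrix.toEuclideanLin A⁻¹)
    fun q hq => by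
      simpa [Matrix.toLpLin_apply, PiLp.inner_apply, dotProduct, mul_comm] using
        hA.inv.dotProduct_mulVec_pos (x := (q : Fin n → ℝ)) (by simpa using hq)
  refine ⟨c / 2, by positivity, fun q => ?_⟩
  have := hc q
  simp only [Lag]
  linarith

/-- The cost `(t - s) L((x - y)/(t - s))` of the straight path from `(s, y)` to `(t, x)`,
with `d = t - s` and `q = x - y`. -/
def action (A : Matrix (Fin n) (Fin n) ℝ) (d : ℝ) (q : EuclideanSpace ℝ (Fin n)) : ℝ :=
  d * Lag A (d⁻¹ • q)

lemma action_eq (d : ℝ) (q : EuclideanSpace ℝ (Fin n)) : action A d q = d⁻¹ * Lag A q := by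
  rw [action, lag_smul]
  rcases eq_or_ne d 0 with rfl | hd
  · simp
  · field_simp

lemma action_smul_self {d : ℝ} (hd : d ≠ 0) (v : EuclideanSpace ℝ (Fin n)) :
    action A d (d • v) = d * Lag A v := by
  rw [action_eq, lag_smul]
  field_simp

lemma action_add_le (hA : A.PosDef) {a b : ℝ} (ha : 0 < a) (hb : 0 < b)
    (v w : EuclideanSpace ℝ (Fin n)) :
    action A (a + b) (v + w) ≤ action A a v + action A b w := by
  simpa only [action_eq] using inv_mul_lag_add_le hA ha hb v w

end Lagrangian

lemma abs_fst_le_pnorm {n : ℕ} (V : ℝ × EuclideanSpace ℝ (Fin n)) : |V.1| ≤ pnorm V :=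
  Real.abs_le_sqrt (le_add_of_nonneg_right (sq_nonneg _))

lemma norm_snd_le_pnorm {n : ℕ} (V : ℝ × EuclideanSpace ℝ (Fin n)) : ‖V.2‖ ≤ pnorm V :=
  (abs_norm V.2).symm ▸ Real.abs_le_sqrt (le_add_of_nonneg_left (sq_nonneg _))

lemma tball_subset {n : ℕ} (tbar : ℝ) (X : ℝ × EuclideanSpace ℝ (Fin n)) (R : ℝ) :
    tball tbar X R ⊆ Ioo tbar (X.1 + R) ×ˢ ball X.2 R := by
  rintro Y ⟨hY1, hYR⟩
  have h1 := (le_abs_self _).trans_lt ((abs_fst_le_pnorm (Y - X)).trans_lt hYR)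
  have h2 := (norm_snd_le_pnorm (Y - X)).trans_lt hYR
  simp only [Prod.fst_sub, Prod.snd_sub] at h1 h2
  exact ⟨⟨hY1, by linarith⟩, by rwa [mem_ball, dist_eq_norm]⟩

lemma closure_tball_subset {n : ℕ} (tbar : ℝ) (X : ℝ × EuclideanSpace ℝ (Fin n)) (R : ℝ) :
    closure (tball tbar X R) ⊆ Icc tbar (X.1 + R) ×ˢ closedBall X.2 R :=
  (isClosed_Icc.prod isClosed_closedBall).closure_subset_iff.2 <|
    (tball_subset tbar X R).trans (prod_mono Ioo_subset_Icc_self ball_subset_closedBall)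

lemma frontier_Ioi_prod {α : Type*} [TopologicalSpace α] (a : ℝ) (Ω : Set α) :
    frontier (Ioi a ×ˢ Ω) = Ici a ×ˢ frontier Ω ∪ {a} ×ˢ closure Ω := by
  rw [frontier_prod_eq, closure_Ioi, frontier_Ioi]

lemma exists_abs_le_on_frontier_Ioi_prod {n : ℕ} {Ω : Set (EuclideanSpace ℝ (Fin n))}
    (hΩ : Bornology.IsBounded Ω) {φ : ℝ × EuclideanSpace ℝ (Fin n) → ℝ}
    (hφ : ContinuousOn φ (frontier (Ioi (0 : ℝ) ×ˢ Ω))) (T : ℝ) :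
    ∃ M > 0, ∀ p ∈ frontier (Ioi (0 : ℝ) ×ˢ Ω), p.1 ≤ T → |φ p| ≤ M := by
  have hsub : frontier (Ioi (0 : ℝ) ×ˢ Ω) ∩ {p | p.1 ≤ T} ⊆ Icc 0 T ×ˢ closure Ω := by
    rintro p ⟨hp, hpT⟩
    have := frontier_subset_closure hp
    rw [closure_prod_eq, closure_Ioi] at this
    exact ⟨⟨this.1, hpT⟩, this.2⟩
  have hcpt := (isCompact_Icc.prod hΩ.isCompact_closure).of_isClosed_subset
    (isClosed_frontier.inter (isClosed_le continuous_fst continuous_const)) hsub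
  obtain ⟨C, hC⟩ := hcpt.exists_bound_of_continuousOn (hφ.mono inter_subset_left)
  exact ⟨max C 1, by positivity, fun p hp hpT => (hC p ⟨hp, hpT⟩).trans (le_max_left _ _)⟩

def SatisfiesHopfFormula {n : ℕ} (A : Matrix (Fin n) (Fin n) ℝ)
    (Q : Set (ℝ × EuclideanSpace ℝ (Fin n))) (φ u : ℝ × EuclideanSpace ℝ (Fin n) → ℝ) : Prop :=
  ∀ X ∈ closure Q, IsLeast {v | ∃ s y, (s, y) ∈ frontier Q ∧ s < X.1 ∧
    v = action A (X.1 - s) (X.2 - y) + φ (s, y)} (u X)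

namespace SatisfiesHopfFormula

variable {n : ℕ} {A : Matrix (Fin n) (Fin n) ℝ} {Q : Set (ℝ × EuclideanSpace ℝ (Fin n))}
  {Ω : Set (EuclideanSpace ℝ (Fin n))}
  {φ u : ℝ × EuclideanSpace ℝ (Fin n) → ℝ} {r s t : ℝ} {x y z : EuclideanSpace ℝ (Fin n)}

lemma le_action_add (hu : SatisfiesHopfFormula A Q φ u) (hA : A.PosDef)
    (hX : (t, x) ∈ closure Q) (hY : (r, y) ∈ closure Q) (hrt : r < t) :
    u (t, x) ≤ action A (t - r) (x - y) + u (r, y) := by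
  obtain ⟨s, z, hsz, hsr, hYeq⟩ := (hu _ hY).1
  have htri := action_add_le hA (sub_pos.2 hrt) (sub_pos.2 hsr) (x - y) (y - z)
  rw [sub_add_sub_cancel, sub_add_sub_cancel] at htri
  have hXle := (hu _ hX).2 ⟨s, z, hsz, hsr.trans hrt, rfl⟩
  dsimp only at hYeq hXle
  linarith

lemma eq_action_add_of_minimizer (hu : SatisfiesHopfFormula A Q φ u) (hA : A.PosDef)
    (hX : (t, x) ∈ closure Q) (hY : (r, y) ∈ closure Q) (hsz : (s, z) ∈ frontier Q)
    (hsr : s < r) (hrt : r < t) (hmin : u (t, x) = action A (t - s) (x - z) + φ (s, z))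
    {v : EuclideanSpace ℝ (Fin n)} (hxz : x - z = (t - s) • v) (hxy : x - y = (t - r) • v) :
    u (t, x) = action A (t - r) (x - y) + u (r, y) := by
  refine le_antisymm (hu.le_action_add hA hX hY hrt) ?_
  have hyz : y - z = (r - s) • v := by
    rw [show r - s = (t - s) - (t - r) by ring, sub_smul, ← hxz, ← hxy]
    abel
  have hYle := (hu _ hY).2 ⟨s, z, hsz, hsr, rfl⟩
  dsimp only at hYle
  rw [hxz, action_smul_self (sub_pos.2 (hsr.trans hrt)).ne'] at hmin
  rw [hyz, action_smul_self (sub_pos.2 hsr).ne'] at hYle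
  rw [hxy, action_smul_self (sub_pos.2 hrt).ne']
  linear_combination hYle - hmin

lemma min_le_sub_of_minimizer (hu : SatisfiesHopfFormula A (Ioi 0 ×ˢ Ω) φ u) (hΩ : IsOpen Ω)
    {c M ρ : ℝ} (hc0 : 0 ≤ c) (hc : ∀ q, c * ‖q‖ ^ 2 ≤ Lag A q)
    (hM : ∀ p ∈ frontier (Ioi (0 : ℝ) ×ˢ Ω), p.1 ≤ t → |φ p| ≤ M)
    (hρ : 0 < ρ) (hxρ : ball x ρ ⊆ Ω) (ht : 0 < t) (hsz : (s, z) ∈ frontier (Ioi 0 ×ˢ Ω))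
    (hst : s < t) (hmin : u (t, x) = action A (t - s) (x - z) + φ (s, z)) :
    min t (c * ρ ^ 2 / (2 * M)) ≤ t - s := by
  rcases eq_or_ne s 0 with rfl | hs
  · simp
  have hz : z ∈ frontier Ω := by
    rw [frontier_Ioi_prod] at hsz
    exact hsz.elim (·.2) fun h => absurd h.1 hs
  have hρz : ρ ≤ ‖x - z‖ := by
    have : z ∉ ball x ρ := fun h => (hΩ.frontier_eq ▸ hz).2 (hxρ h)
    simpa [dist_eq_norm, norm_sub_rev] using this
  have hx : x ∈ Ω := hxρ (mem_ball_self hρ)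
  have hx0 : ((0 : ℝ), x) ∈ frontier (Ioi (0 : ℝ) ×ˢ Ω) := by
    rw [frontier_Ioi_prod]
    exact Or.inr ⟨rfl, subset_closure hx⟩
  -- `u(t, x) ≤ φ(0, x)`: the vertical path from `(0, x)` costs nothing.
  have hux : u (t, x) ≤ φ (0, x) :=
    (hu _ (subset_closure (mk_mem_prod ht hx))).2 ⟨0, x, hx0, ht, by simp [action_eq]⟩
  have hM0 := hM _ hx0 ht.le
  have hMz := hM _ hsz hst.le
  have hcost : c * ρ ^ 2 ≤ (t - s) * (2 * M) :=
    calc c * ρ ^ 2 ≤ c * ‖x - z‖ ^ 2 := by gcongr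
      _ ≤ Lag A (x - z) := hc _
      _ = (t - s) * action A (t - s) (x - z) := by
        rw [action_eq]; field_simp [(sub_pos.2 hst).ne']
      _ ≤ (t - s) * (2 * M) := by
        gcongr
        linarith [le_abs_self (φ (0, x)), neg_abs_le (φ (s, z))]
  exact (min_le_right _ _).trans <|
    div_le_of_le_mul₀ (by linarith [abs_nonneg (φ (0, x))]) (by linarith) hcost

lemma isLeast_of_minimizer (hu : SatisfiesHopfFormula A (Ioi 0 ×ˢ Ω) φ u) (hA : A.PosDef)
    (hr : 0 < r) (hx : x ∈ Ω) (hsz : (s, z) ∈ frontier (Ioi 0 ×ˢ Ω)) (hsr : s < r)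
    (hrt : r < t) (hmin : u (t, x) = action A (t - s) (x - z) + φ (s, z))
    (hy : x - (t - r) • (t - s)⁻¹ • (x - z) ∈ Ω) :
    IsLeast {v | ∃ y ∈ Ω, v = action A (t - r) (x - y) + u (r, y)} (u (t, x)) := by
  have hΩQ : ∀ y ∈ Ω, (r, y) ∈ closure (Ioi 0 ×ˢ Ω) := fun y hy =>
    subset_closure (mk_mem_prod hr hy)
  have hX : (t, x) ∈ closure (Ioi 0 ×ˢ Ω) := subset_closure (mk_mem_prod (hr.trans hrt) hx)
  refine ⟨⟨_, hy, hu.eq_action_add_of_minimizer hA hX (hΩQ _ hy) hsz hsr hrt hmin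
    (smul_inv_smul₀ (sub_pos.2 (hsr.trans hrt)).ne' _).symm (sub_sub_cancel _ _)⟩, ?_⟩
  rintro _ ⟨y, hy, rfl⟩
  exact hu.le_action_add hA hX (hΩQ y hy) hrt

lemma isLeast_of_sub_lt (hu : SatisfiesHopfFormula A (Ioi 0 ×ˢ Ω) φ u) (hA : A.PosDef)
    (hΩ : IsOpen Ω) (hΩb : Bornology.IsBounded Ω) {c M δ η : ℝ} (hc0 : 0 ≤ c)
    (hc : ∀ q, c * ‖q‖ ^ 2 ≤ Lag A q)
    (hM : ∀ p ∈ frontier (Ioi (0 : ℝ) ×ˢ Ω), p.1 ≤ t → |φ p| ≤ M)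
    (hδ : 0 < δ) (hxδ : ball x δ ⊆ Ω) (hη0 : 0 < η) (hη : η ≤ min t (c * δ ^ 2 / (2 * M)))
    (hr : 0 < r) (hrt : r < t) (hrη : t - r < η) (hrΩ : (t - r) * Metric.diam Ω < δ * η) :
    IsLeast {v | ∃ y ∈ Ω, v = action A (t - r) (x - y) + u (r, y)} (u (t, x)) := by
  have hx : x ∈ Ω := hxδ (mem_ball_self hδ)
  obtain ⟨s, z, hsz, hst, hmin⟩ := (hu _ (subset_closure (mk_mem_prod (hr.trans hrt) hx))).1
  dsimp only at hst hmin
  have hgap : η ≤ t - s :=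
    hη.trans (hu.min_le_sub_of_minimizer hΩ hc0 hc hM hδ hxδ (hr.trans hrt) hsz hst hmin)
  refine hu.isLeast_of_minimizer hA hr hx hsz (by linarith) hrt hmin (hxδ ?_)
  have hz : z ∈ closure Ω := by
    have := frontier_subset_closure hsz
    rw [closure_prod_eq] at this
    exact this.2
  have hxz : ‖x - z‖ ≤ Metric.diam Ω := by
    rw [← dist_eq_norm, ← Metric.diam_closure]
    exact Metric.dist_le_diam_of_mem hΩb.closure (subset_closure hx) hz
  rw [mem_ball, dist_eq_norm, sub_sub_cancel_left, norm_neg, norm_smul, norm_smul,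
    Real.norm_of_nonneg (by linarith), Real.norm_of_nonneg (by simp only [inv_nonneg]; linarith)]
  calc (t - r) * ((t - s)⁻¹ * ‖x - z‖) ≤ (t - r) * (η⁻¹ * Metric.diam Ω) := by
        gcongr
    _ = (t - r) * Metric.diam Ω / η := by ring
    _ < δ := by rwa [div_lt_iff₀ hη0]

end SatisfiesHopfFormula

theorem statement0
    {n : ℕ}
    (Ω : Set (EuclideanSpace ℝ (Fin n))) (hΩo : IsOpen Ω)
    (hΩb : Bornology.IsBounded Ω)
    (A : Matrix (Fin n) (Fin n) ℝ) (hA : A.PosDef)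
    (Q : Set (ℝ × EuclideanSpace ℝ (Fin n))) (hQ : Q = Ioi (0 : ℝ) ×ˢ Ω)
    (φ u : ℝ × EuclideanSpace ℝ (Fin n) → ℝ)
    (hφ : ∃ K, LipschitzOnWith K φ (frontier Q))
    (hu : ∀ X ∈ closure Q, IsLeast
      {v | ∃ s y, (s, y) ∈ frontier Q ∧ s < X.1 ∧
        v = (X.1 - s) * Lag A ((X.1 - s)⁻¹ • (X.2 - y)) + φ (s, y)} (u X))
    (t' : ℝ) (x' : EuclideanSpace ℝ (Fin n)) (hX' : (t', x') ∈ Q) :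
    ∃ R > 0, ∃ tbar : ℝ, 0 < tbar ∧ tbar < t' ∧
      closure (tball tbar (t', x') R) ⊆ Q ∧
      ∀ X ∈ tball tbar (t', x') R,
        IsLeast {v | ∃ y ∈ Ω,
          v = (X.1 - tbar) * Lag A ((X.1 - tbar)⁻¹ • (X.2 - y)) + u (tbar, y)} (u X) := by
  subst hQ
  replace hu : SatisfiesHopfFormula A (Ioi 0 ×ˢ Ω) φ u := hu
  obtain ⟨K, hK⟩ := hφ
  obtain ⟨ht'0, hx'Ω⟩ : 0 < t' ∧ x' ∈ Ω := hX'
  obtain ⟨δ, hδ0, hδΩ⟩ : ∃ δ > 0, ball x' (2 * δ) ⊆ Ω := by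
    obtain ⟨ε, hε0, hδΩ⟩ := Metric.isOpen_iff.1 hΩo x' hx'Ω
    exact ⟨ε / 2, by positivity, by rwa [mul_div_cancel₀ _ two_ne_zero]⟩
  obtain ⟨c, hc0, hc⟩ := exists_mul_sq_norm_le_lag hA
  obtain ⟨M, hM0, hM⟩ := exists_abs_le_on_frontier_Ioi_prod hΩb hK.continuousOn (2 * t')
  set D := Metric.diam Ω
  have hD : 0 ≤ D := Metric.diam_nonneg
  -- `η` bounds from below the time `t - s` spent by a minimizing path of `u(t, x)`.
  set η := min (t' / 2) (c * δ ^ 2 / (2 * M))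
  have hη0 : 0 < η := by positivity
  set R := min δ (min (η / 2) (δ * η / (2 * (D + 1))))
  have hR0 : 0 < R := by positivity
  obtain ⟨hRδ, hRη, hRD⟩ : R ≤ δ ∧ R ≤ η / 2 ∧ R ≤ δ * η / (2 * (D + 1)) :=
    ⟨min_le_left _ _, (min_le_right _ _).trans (min_le_left _ _),
      (min_le_right _ _).trans (min_le_right _ _)⟩
  rw [le_div_iff₀ (by positivity)] at hRD
  have hηt' : η ≤ t' / 2 := min_le_left _ _
  refine ⟨R, hR0, t' - R, by linarith, by linarith, fun Y hY => ?_, ?_⟩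
  · obtain ⟨⟨hY1, -⟩, hY2⟩ := closure_tball_subset _ _ _ hY
    exact ⟨by simp only [mem_Ioi]; linarith, hδΩ (closedBall_subset_ball (by linarith) hY2)⟩
  rintro ⟨t, x⟩ hX
  obtain ⟨⟨htbar, htR⟩, hxR⟩ := tball_subset _ _ _ hX
  rw [mem_ball] at hxR
  exact hu.isLeast_of_sub_lt hA hΩo hΩb hc0.le hc (fun p hp hpt => hM p hp (by linarith))
    hδ0 ((ball_subset_ball' (by linarith)).trans hδΩ) hη0 (min_le_min (by linarith) le_rfl)
    (by linarith) htbar (by linarith) (by nlinarith)
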